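/- arXiv:1401.2434 — 7 statements merged into one kernel-verified Lean document; each statement's English description precedes it below -/
import Mathlib

section
/- Let G be a finite abelian group of order n ≥ 4 with enumeration g_0, ..., g_{n-1} (g_0 = 0), and let L = {x ∈ ℤ^n : Σ x_i = 0, Σ x_i g_i = 0 in G}. Then every nonzero x ∈ L has Euclidean norm ‖x‖ ≥ 2, and this bound is attained; i.e., the minimum distance of the lattice L equals 2. -/
/-!
Since `x ^ 2 ≡ x [ZMOD 2]`, a vector with coordinate sum zero has even squared norm. A nonzero
such vector of squared norm below 4 therefore has squared norm 2, i.e. it is `e_i - e_j` with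
`i ≠ j`, and `∑ x_k g_k = g_i - g_j ≠ 0` by injectivity of the enumeration. Conversely, in a
group with at least four elements one finds `a, b` with `a, b, a + b, 0` pairwise distinct, and
`e_P + e_Q - e_R - e_S` is a lattice vector of squared norm 4, where `P, Q, R, S` enumerate
`a, b, a + b, 0`.
-/

open Finset

section

variable {ι : Type*} [Fintype ι]

theorem even_sum_sq_of_sum_eq_zero {x : ι → ℤ} (hsum : ∑ i, x i = 0) : Even (∑ i, x i ^ 2) := by
  have h : Even (∑ i, (x i ^ 2 - x i)) :=
    even_sum _ fun i _ => by simpa [sq, mul_sub] using Int.even_mul_pred_self (x i)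
  rwa [sum_sub_distrib, hsum, sub_zero] at h

variable [DecidableEq ι]

theorem eq_single_sub_single_of_sum_sq_lt_four {x : ι → ℤ} (hsum : ∑ i, x i = 0) (hx : x ≠ 0)
    (hsq : ∑ i, x i ^ 2 < 4) : ∃ i j, i ≠ j ∧ x = Pi.single i 1 - Pi.single j 1 := by
  have hnz : ∃ i ∈ univ, x i ≠ 0 := by simpa [funext_iff] using hx
  obtain ⟨i, -, hi⟩ := exists_pos_of_sum_zero_of_exists_nonzero x hsum hnz
  obtain ⟨j, -, hj⟩ := exists_pos_of_sum_zero_of_exists_nonzero (s := univ) (-x)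
    (by simp [hsum]) (by simpa using hnz)
  rw [Pi.neg_apply, neg_pos] at hj
  have hij : i ≠ j := by rintro rfl; omega
  set rest := (univ.erase i).erase j
  have hsplit : ∑ k, x k ^ 2 = x i ^ 2 + x j ^ 2 + ∑ k ∈ rest, x k ^ 2 := by
    rw [← add_sum_erase _ _ (mem_univ i),
      ← add_sum_erase _ _ (mem_erase.2 ⟨hij.symm, mem_univ j⟩), add_assoc]
  have hrest : 0 ≤ ∑ k ∈ rest, x k ^ 2 := sum_nonneg fun k _ => sq_nonneg _
  -- the total is even, positive and below 4, so it is 2 and all of it sits at `i` and `j`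
  obtain ⟨m, hm⟩ := even_sum_sq_of_sum_eq_zero hsum
  have hxi : x i = 1 := by nlinarith
  have hxj : x j = -1 := by nlinarith
  have hrest0 : ∑ k ∈ rest, x k ^ 2 = 0 := by rw [hsplit, hxi, hxj] at hm hsq; omega
  have hzero : ∀ k ∈ rest, x k = 0 := fun k hk =>
    pow_eq_zero_iff two_ne_zero |>.1 <|
      (sum_eq_zero_iff_of_nonneg fun k _ => sq_nonneg (x k)).1 hrest0 k hk
  refine ⟨i, j, hij, funext fun k => ?_⟩
  by_cases hki : k = i
  · subst hki; simp [hxi, hij]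
  by_cases hkj : k = j
  · subst hkj; simp [hxj, hki]
  simp [hzero k (by simp [rest, hki, hkj]), hki, hkj]

theorem four_le_sum_sq_of_injective {G : Type*} [AddCommGroup G] {g : ι → G}
    (hg : Function.Injective g) {x : ι → ℤ} (hsum : ∑ i, x i = 0) (hsmul : ∑ i, x i • g i = 0)
    (hx : x ≠ 0) : 4 ≤ ∑ i, x i ^ 2 := by
  by_contra! hlt
  obtain ⟨i, j, hij, rfl⟩ := eq_single_sub_single_of_sum_sq_lt_four hsum hx hlt
  refine hij (hg (sub_eq_zero.1 ?_))
  simpa [sub_smul, sum_sub_distrib, Pi.single_apply] using hsmul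

theorem sum_sq_single_add_single_sub_single_sub_single {i j k l : ι} (h : [i, j, k, l].Nodup) :
    ∑ m, (Pi.single i 1 + Pi.single j 1 - Pi.single k 1 - Pi.single l 1 : ι → ℤ) m ^ 2 = 4 := by
  simp only [List.nodup_cons, List.mem_cons, List.not_mem_nil] at h
  have hpt : ∀ m, (Pi.single i 1 + Pi.single j 1 - Pi.single k 1 - Pi.single l 1 : ι → ℤ) m ^ 2
      = (Pi.single i 1 + Pi.single j 1 + Pi.single k 1 + Pi.single l 1 : ι → ℤ) m := by
    intro m
    simp only [Pi.add_apply, Pi.sub_apply, Pi.single_apply]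
    split_ifs <;> simp_all
  rw [sum_congr rfl fun m _ => hpt m]
  simp [sum_add_distrib]

end

theorem exists_nodup_add_zero_of_four_le_card {G : Type*} [AddCommGroup G] [Fintype G]
    (hG : 4 ≤ Fintype.card G) : ∃ a b : G, [a, b, a + b, 0].Nodup := by
  classical
  obtain ⟨a, -, ha⟩ := exists_mem_notMem_of_card_lt_card (s := ({0} : Finset G)) (t := univ)
    (by simp; omega)
  obtain ⟨b, -, hb⟩ :=
    exists_mem_notMem_of_card_lt_card (s := ({0, a, -a} : Finset G)) (t := univ)
      (card_le_three.trans_lt (by simp; omega))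
  simp only [mem_insert, mem_singleton, not_or] at ha hb
  refine ⟨a, b, ?_⟩
  have hab : a + b ≠ 0 := fun h => hb.2.2 (eq_neg_of_add_eq_zero_right h)
  simp [ha, hb.1, hab, Ne.symm hb.2.1]

/-- For `G` finite abelian of order `n ≥ 4` with enumeration `g`,
`g 0 = 0`, every nonzero `x ∈ L = {x : ∑ x i = 0, ∑ x i • g i = 0}` has
Euclidean norm `≥ 2`, and the bound is attained: the minimum distance is `2`. -/
theorem stmt_3 (n : ℕ) (hn : 4 ≤ n) (G : Type) [AddCommGroup G] [Fintype G]
    (hcard : Fintype.card G = n) (g : Fin n ≃ G) :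
    (∀ x : Fin n → ℤ, ∑ i, x i = 0 → ∑ i, x i • g i = 0 → x ≠ 0 →
      2 ≤ Real.sqrt (∑ i, ((x i : ℝ)) ^ 2)) ∧
    (∃ x : Fin n → ℤ, ∑ i, x i = 0 ∧ ∑ i, x i • g i = 0 ∧ x ≠ 0 ∧
      Real.sqrt (∑ i, ((x i : ℝ)) ^ 2) = 2) := by
  refine ⟨fun x hsum hsmul hx => ?_, ?_⟩
  · rw [Real.le_sqrt zero_le_two (by positivity)]
    have h4 := four_le_sum_sq_of_injective g.injective hsum hsmul hx
    norm_num
    exact_mod_cast h4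
  · obtain ⟨a, b, hnodup⟩ := exists_nodup_add_zero_of_four_le_card (G := G) (by omega)
    have hidx := hnodup.map g.symm.injective
    simp only [List.map_cons, List.map_nil] at hidx
    set x : Fin n → ℤ := Pi.single (g.symm a) 1 + Pi.single (g.symm b) 1
      - Pi.single (g.symm (a + b)) 1 - Pi.single (g.symm 0) 1
    have hsq : ∑ i, x i ^ 2 = 4 := sum_sq_single_add_single_sub_single_sub_single hidx
    refine ⟨x, ?_, ?_, ?_, ?_⟩
    · simp [x, sum_add_distrib, sum_sub_distrib]
    · simp [x, add_smul, sub_smul, sum_add_distrib, sum_sub_distrib, Pi.single_apply]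
    · intro hx; simp [hx] at hsq
    · rw [Real.sqrt_eq_iff_eq_sq (by positivity) zero_le_two]
      exact_mod_cast hsq.trans (by norm_num)
end

section
/- Let G be a finite abelian group of order n ≥ 4 and ε = |G[2]|. Then the number of ordered quadruples (P, Q, R, S) of pairwise distinct elements of G satisfying P + Q = R + S, counted as unordered-pair data — i.e., the number of vectors e_P + e_Q − e_R − e_S in ℤ^G with P, Q, R, S pairwise distinct and P + Q = R + S — equals (n/ε)·(n−ε)(n−ε−2)/4 + (n − n/ε)·n(n−2)/4. -/
/-!
Write `h(A) = #{x | 2x = A}`, so `∑ h(A) = n`. The nonempty fibres of `x ↦ 2x` are cosets of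
`G[2]`, so `h(A) ∈ {0, ε}` and `∑ h(A)² = εn`. For each `A` there are `n - h(A)` ordered pairs
`P ≠ Q` with `P + Q = A`, so `P + Q = R + S` has `∑ (n - h(A))² = n³ - 2n² + εn` solutions with
`P ≠ Q`, `R ≠ S`. Given the common sum, such a solution has pairwise distinct entries unless
`(R, S)` is `(P, Q)` or `(Q, P)`, which accounts for `2n(n - 1)` solutions. Finally the `+1` and
`-1` entries of `e_P + e_Q - e_R - e_S` recover `{P, Q}` and `{R, S}`, so every vector comes from
exactly four distinct quadruples.
-/

open Finset

theorem Finset.card_filter_product_self_eq_sum_sq {β γ : Type*} [DecidableEq γ] {f : β → γ}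
    {s : Finset β} {t : Finset γ} (hf : ∀ x ∈ s, f x ∈ t) :
    #{q ∈ s ×ˢ s | f q.1 = f q.2} = ∑ c ∈ t, #{x ∈ s | f x = c} ^ 2 := by
  rw [card_eq_sum_card_fiberwise (f := fun q => f q.1) (t := t)]
  · refine sum_congr rfl fun c _ => ?_
    rw [sq, ← card_product]
    congr 1
    ext q
    simp only [mem_filter, mem_product]
    constructor
    · rintro ⟨⟨⟨h1, h2⟩, h⟩, rfl⟩; exact ⟨⟨h1, rfl⟩, h2, h.symm⟩
    · rintro ⟨⟨h1, rfl⟩, h2, h⟩; exact ⟨⟨⟨h1, h2⟩, h.symm⟩, rfl⟩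
  · intro q hq
    exact hf _ (mem_product.1 (mem_filter.1 hq).1).1

theorem Prod.eq_or_eq_swap_of_ne {α : Type*} {a b c d : α} (h : c ≠ d) (hc : c = a ∨ c = b)
    (hd : d = a ∨ d = b) : (c, d) = (a, b) ∨ (c, d) = (b, a) := by
  rcases hc with rfl | rfl <;> rcases hd with rfl | rfl <;> simp_all

section QuadVec

variable {α : Type*}

def QuadDistinct (q : (α × α) × (α × α)) : Prop :=
  q.1.1 ≠ q.1.2 ∧ q.1.1 ≠ q.2.1 ∧ q.1.1 ≠ q.2.2 ∧ q.1.2 ≠ q.2.1 ∧ q.1.2 ≠ q.2.2 ∧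
    q.2.1 ≠ q.2.2

variable [DecidableEq α]

instance : DecidablePred (QuadDistinct (α := α)) := fun _ => by
  unfold QuadDistinct; infer_instance

def quadVec (q : (α × α) × (α × α)) : α → ℤ :=
  Pi.single q.1.1 1 + Pi.single q.1.2 1 - Pi.single q.2.1 1 - Pi.single q.2.2 1

theorem quadVec_apply (q : (α × α) × (α × α)) (t : α) :
    quadVec q t = (if t = q.1.1 then 1 else 0) + (if t = q.1.2 then 1 else 0)
      - (if t = q.2.1 then 1 else 0) - (if t = q.2.2 then 1 else 0) := by
  simp [quadVec, Pi.single_apply]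

theorem quadVec_swap_fst (q : (α × α) × (α × α)) : quadVec (q.1.swap, q.2) = quadVec q := by
  simp only [quadVec, Prod.fst_swap, Prod.snd_swap]; abel

theorem quadVec_swap_snd (q : (α × α) × (α × α)) : quadVec (q.1, q.2.swap) = quadVec q := by
  simp only [quadVec, Prod.fst_swap, Prod.snd_swap]; abel

theorem QuadDistinct.quadVec_apply_eq_one_iff {q : (α × α) × (α × α)} (hq : QuadDistinct q)
    (t : α) : quadVec q t = 1 ↔ t = q.1.1 ∨ t = q.1.2 := by
  obtain ⟨⟨P, Q⟩, ⟨R, S⟩⟩ := q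
  obtain ⟨h1, h2, h3, h4, h5, h6⟩ := hq
  rw [quadVec_apply]
  by_cases t = P <;> by_cases t = Q <;> by_cases t = R <;> by_cases t = S <;> simp_all

theorem QuadDistinct.quadVec_apply_eq_neg_one_iff {q : (α × α) × (α × α)}
    (hq : QuadDistinct q) (t : α) : quadVec q t = -1 ↔ t = q.2.1 ∨ t = q.2.2 := by
  obtain ⟨⟨P, Q⟩, ⟨R, S⟩⟩ := q
  obtain ⟨h1, h2, h3, h4, h5, h6⟩ := hq
  rw [quadVec_apply]
  by_cases t = P <;> by_cases t = Q <;> by_cases t = R <;> by_cases t = S <;> simp_all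

theorem QuadDistinct.quadVec_eq_iff {q q' : (α × α) × (α × α)} (hq : QuadDistinct q)
    (hq' : QuadDistinct q') :
    quadVec q' = quadVec q ↔ q' ∈ ({q.1, q.1.swap} : Finset _) ×ˢ {q.2, q.2.swap} := by
  simp only [mem_product, mem_insert, mem_singleton]
  constructor
  · intro h
    have hpos (t) : t = q'.1.1 ∨ t = q'.1.2 → t = q.1.1 ∨ t = q.1.2 := fun ht =>
      (hq.quadVec_apply_eq_one_iff t).1 (h ▸ (hq'.quadVec_apply_eq_one_iff t).2 ht)
    have hneg (t) : t = q'.2.1 ∨ t = q'.2.2 → t = q.2.1 ∨ t = q.2.2 := fun ht =>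
      (hq.quadVec_apply_eq_neg_one_iff t).1 (h ▸ (hq'.quadVec_apply_eq_neg_one_iff t).2 ht)
    exact ⟨Prod.eq_or_eq_swap_of_ne hq'.1 (hpos _ (.inl rfl)) (hpos _ (.inr rfl)),
      Prod.eq_or_eq_swap_of_ne hq'.2.2.2.2.2 (hneg _ (.inl rfl)) (hneg _ (.inr rfl))⟩
  · obtain ⟨p', r'⟩ := q'
    rintro ⟨hp | hp, hr | hr⟩ <;> subst hp hr
    exacts [rfl, quadVec_swap_snd q, quadVec_swap_fst q,
      (quadVec_swap_fst (q.1, q.2.swap)).trans (quadVec_swap_snd q)]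

end QuadVec

theorem quadDistinct_iff_of_add_eq {M : Type*} [AddCancelCommMonoid M] {P Q R S : M}
    (hPQ : P ≠ Q) (hRS : R ≠ S) (h : P + Q = R + S) :
    QuadDistinct ((P, Q), (R, S)) ↔ (R, S) ≠ (P, Q) ∧ (R, S) ≠ (Q, P) := by
  simp only [QuadDistinct, ne_eq, Prod.mk.injEq]
  constructor
  · rintro ⟨-, hPR, hPS, -, -, -⟩
    exact ⟨fun h' => hPR h'.1.symm, fun h' => hPS h'.2.symm⟩
  · rintro ⟨h1, h2⟩
    refine ⟨hPQ, ?_, ?_, ?_, ?_, hRS⟩ <;> rintro rfl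
    · exact h1 ⟨rfl, (add_left_cancel h).symm⟩
    · exact h2 ⟨(add_left_cancel (h.trans (add_comm _ _))).symm, rfl⟩
    · exact h2 ⟨rfl, (add_left_cancel ((add_comm _ _).trans h)).symm⟩
    · exact h1 ⟨(add_right_cancel h).symm, rfl⟩

section AddCommGroup

variable {G : Type*} [AddCommGroup G] [Fintype G] [DecidableEq G]

def halves (A : G) : Finset G := {x | 2 • x = A}

theorem card_filter_fst_add_snd_eq (A : G) :
    #{p : G × G | p.1 + p.2 = A} = Fintype.card G := by
  rw [← card_univ]
  refine card_nbij' Prod.fst (fun x => (x, A - x)) (by simp) (by simp) ?_ fun _ _ => rfl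
  intro p hp
  simp [← (mem_filter.1 hp).2]

theorem card_offDiag_filter_add_eq_add_card_halves (A : G) :
    #{p ∈ univ.offDiag | p.1 + p.2 = A} + #(halves A) = Fintype.card G := by
  have hdiag : #{p ∈ univ.diag | p.1 + p.2 = A} = #(halves A) := by
    rw [diag, filter_map, card_map]
    congr 1
    ext x
    simp [halves, two_nsmul]
  rw [← hdiag, add_comm,
    ← card_union_of_disjoint (disjoint_filter_filter (disjoint_diag_offDiag _)),
    ← filter_union, diag_union_offDiag, univ_product_univ, card_filter_fst_add_snd_eq]

theorem sum_card_halves : ∑ A : G, #(halves A) = Fintype.card G := by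
  rw [← card_univ, card_eq_sum_card_fiberwise (f := fun x : G => 2 • x)
    (fun _ _ => mem_coe.2 (mem_univ _))]
  rfl

theorem card_halves_sq (A : G) : #(halves A) ^ 2 = #(halves (0 : G)) * #(halves A) := by
  by_cases hA : A ∈ Set.range (nsmulAddMonoidHom (α := G) 2)
  · have h := AddMonoidHom.card_fiber_eq_of_mem_range _ hA ⟨0, map_zero _⟩
    simp only [nsmulAddMonoidHom_apply] at h
    rw [sq, halves, halves, h]
  · have : halves A = ∅ := by
      ext x
      simp only [halves, mem_filter, mem_univ, true_and, notMem_empty, iff_false]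
      exact fun hx => hA ⟨x, hx⟩
    simp [this]

theorem sum_card_halves_sq :
    ∑ A : G, #(halves A) ^ 2 = #(halves (0 : G)) * Fintype.card G := by
  simp_rw [card_halves_sq, ← mul_sum, sum_card_halves]

variable (G) in
def distinctAddQuads : Finset ((G × G) × (G × G)) :=
  {q | QuadDistinct q ∧ q.1.1 + q.1.2 = q.2.1 + q.2.2}

variable (G) in
def offDiagAddQuads : Finset ((G × G) × (G × G)) :=
  {q ∈ univ.offDiag ×ˢ univ.offDiag | q.1.1 + q.1.2 = q.2.1 + q.2.2}

theorem card_offDiagAddQuads :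
    (#(offDiagAddQuads G) : ℤ) = (Fintype.card G : ℤ) ^ 3 - 2 * (Fintype.card G : ℤ) ^ 2
      + #(halves (0 : G)) * Fintype.card G := by
  set n := Fintype.card G
  have hfib (A : G) : (#{p ∈ univ.offDiag | p.1 + p.2 = A} : ℤ) = n - #(halves A) := by
    rw [eq_sub_iff_add_eq]; exact_mod_cast card_offDiag_filter_add_eq_add_card_halves A
  have hsum : (∑ A : G, #(halves A) : ℤ) = n := by exact_mod_cast sum_card_halves
  have hsq : (∑ A : G, (#(halves A) : ℤ) ^ 2) = #(halves (0 : G)) * n := by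
    exact_mod_cast sum_card_halves_sq
  rw [offDiagAddQuads, card_filter_product_self_eq_sum_sq (f := fun p : G × G => p.1 + p.2)
    (t := univ) (fun _ _ => mem_univ _)]
  push_cast
  simp_rw [hfib, sub_sq, sum_add_distrib, sum_sub_distrib, ← mul_sum, hsq, hsum]
  simp only [sum_const, card_univ, nsmul_eq_mul]
  ring

theorem card_offDiagAddQuads_eq :
    #(offDiagAddQuads G) = #(distinctAddQuads G) + 2 * #(univ : Finset G).offDiag := by
  have hdist :
      {q ∈ offDiagAddQuads G | q.2 ≠ q.1 ∧ q.2 ≠ q.1.swap} = distinctAddQuads G := by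
    ext ⟨⟨P, Q⟩, ⟨R, S⟩⟩
    simp only [offDiagAddQuads, distinctAddQuads, mem_filter, mem_product, mem_offDiag,
      mem_univ, true_and, Prod.swap_prod_mk]
    constructor
    · rintro ⟨⟨⟨hPQ, hRS⟩, h⟩, hne⟩
      exact ⟨(quadDistinct_iff_of_add_eq hPQ hRS h).2 hne, h⟩
    · rintro ⟨hd, h⟩
      exact ⟨⟨⟨hd.1, hd.2.2.2.2.2⟩, h⟩,
        (quadDistinct_iff_of_add_eq hd.1 hd.2.2.2.2.2 h).1 hd⟩
  have htriv : {q ∈ offDiagAddQuads G | ¬(q.2 ≠ q.1 ∧ q.2 ≠ q.1.swap)} =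
      univ.offDiag.image (fun p => (p, p)) ∪ univ.offDiag.image (fun p => (p, p.swap)) := by
    ext ⟨p, r⟩
    simp only [offDiagAddQuads, mem_filter, mem_product, mem_union, mem_image, Prod.mk.injEq]
    constructor
    · rintro ⟨⟨⟨hp, -⟩, -⟩, hpr⟩
      rcases not_and_or.1 hpr with h | h <;> rw [not_ne_iff] at h <;> subst r
      exacts [.inl ⟨p, hp, rfl, rfl⟩, .inr ⟨p, hp, rfl, rfl⟩]
    · rintro (⟨p, hp, rfl, rfl⟩ | ⟨p, hp, rfl, rfl⟩)
      · exact ⟨⟨⟨hp, hp⟩, rfl⟩, by simp⟩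
      · exact ⟨⟨⟨hp, by simpa [eq_comm] using hp⟩, add_comm _ _⟩, by simp⟩
  have hdisj : Disjoint (univ.offDiag.image fun p : G × G => (p, p))
      (univ.offDiag.image fun p => (p, p.swap)) := by
    simp only [disjoint_left, mem_image, not_exists, not_and, mem_offDiag]
    rintro _ ⟨p, hp, rfl⟩ p' - hp'
    simp only [Prod.mk.injEq] at hp'
    obtain ⟨rfl, h⟩ := hp'
    exact hp.2.2 (congrArg Prod.fst h).symm
  have hinj {g : G × G → G × G} : Function.Injective fun p => (p, g p) :=
    fun _ _ h => congrArg Prod.fst h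
  rw [← card_filter_add_card_filter_not (s := offDiagAddQuads G)
      (fun q => q.2 ≠ q.1 ∧ q.2 ≠ q.1.swap),
    hdist, htriv, card_union_of_disjoint hdisj, card_image_of_injective _ hinj,
    card_image_of_injective _ hinj, two_mul]

theorem card_distinctAddQuads_eq_four_mul :
    #(distinctAddQuads G) = 4 * #((distinctAddQuads G).image quadVec) := by
  rw [card_eq_sum_card_image quadVec (distinctAddQuads G), mul_comm]
  refine sum_const_nat fun v hv => ?_
  obtain ⟨⟨⟨P, Q⟩, ⟨R, S⟩⟩, hq, rfl⟩ := mem_image.1 hv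
  obtain ⟨hd, -⟩ := (mem_filter.1 hq).2
  have hfib : {q' ∈ distinctAddQuads G | quadVec q' = quadVec ((P, Q), (R, S))} =
      ({(P, Q), (Q, P)} : Finset _) ×ˢ {(R, S), (S, R)} := by
    ext q'
    rw [mem_filter]
    constructor
    · rintro ⟨hq', h⟩
      exact (hd.quadVec_eq_iff (mem_filter.1 hq').2.1).1 h
    · intro h
      refine ⟨?_, (hd.quadVec_eq_iff ?_).2 h⟩ <;>
      · obtain ⟨p', r'⟩ := q'
        simp only [mem_product, mem_insert, mem_singleton] at h
        obtain ⟨rfl | rfl, rfl | rfl⟩ := h <;>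
          simp_all [distinctAddQuads, QuadDistinct, eq_comm, add_comm]
  rw [hfib, card_product, card_pair, card_pair] <;> simp [hd.1, hd.2.2.2.2.2]

theorem mem_image_quadVec_distinctAddQuads (x : G → ℤ) :
    x ∈ (distinctAddQuads G).image quadVec ↔ ∃ P Q R S : G,
      P ≠ Q ∧ P ≠ R ∧ P ≠ S ∧ Q ≠ R ∧ Q ≠ S ∧ R ≠ S ∧ P + Q = R + S ∧
      x = Pi.single P 1 + Pi.single Q 1 - Pi.single R 1 - Pi.single S 1 := by
  simp only [distinctAddQuads, QuadDistinct, quadVec, mem_image, mem_filter, mem_univ,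
    true_and, Prod.exists, and_assoc, eq_comm (b := x)]

end AddCommGroup

theorem stmt_7_general (G : Type) [AddCommGroup G] [Fintype G] [DecidableEq G] (n ε : ℕ)
    (hn : Fintype.card G = n)
    (hε : ε = Nat.card {x : G // 2 • x = 0}) :
    (Nat.card {x : G → ℤ // ∃ P Q R S : G,
        P ≠ Q ∧ P ≠ R ∧ P ≠ S ∧ Q ≠ R ∧ Q ≠ S ∧ R ≠ S ∧ P + Q = R + S ∧
        x = Pi.single P 1 + Pi.single Q 1 - Pi.single R 1 - Pi.single S 1} : ℚ) =
      ((n : ℚ) / ε) * (((n : ℚ) - ε) * ((n : ℚ) - ε - 2) / 4) +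
        ((n : ℚ) - (n : ℚ) / ε) * ((n : ℚ) * ((n : ℚ) - 2) / 4) := by
  simp_rw [← mem_image_quadVec_distinctAddQuads, Nat.card_eq_fintype_card, Fintype.card_coe]
  have hε' : ε = #(halves (0 : G)) := by
    rw [hε, Nat.card_eq_fintype_card, Fintype.card_subtype]; rfl
  have hε0 : (ε : ℚ) ≠ 0 := by
    rw [hε', Nat.cast_ne_zero, ← pos_iff_ne_zero, card_pos]
    exact ⟨0, by simp [halves]⟩
  have hcount := card_offDiagAddQuads (G := G)
  rw [card_offDiagAddQuads_eq, card_distinctAddQuads_eq_four_mul, offDiag_card, card_univ,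
    hn, ← hε'] at hcount
  push_cast [Nat.le_mul_self n] at hcount
  qify at hcount
  field_simp
  linear_combination (ε : ℚ) * hcount

/-- For `G` finite abelian of order `n ≥ 4` with `ε = |G[2]|`, the
number of vectors `e_P + e_Q − e_R − e_S ∈ ℤ^G` with `P, Q, R, S` pairwise
distinct and `P + Q = R + S` equals
`(n/ε)·(n−ε)(n−ε−2)/4 + (n − n/ε)·n(n−2)/4`. -/
theorem stmt_7 (G : Type) [AddCommGroup G] [Fintype G] [DecidableEq G] (n ε : ℕ)
    (hn : Fintype.card G = n) (hn4 : 4 ≤ n)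
    (hε : ε = Nat.card {x : G // 2 • x = 0}) :
    (Nat.card {x : G → ℤ // ∃ P Q R S : G,
        P ≠ Q ∧ P ≠ R ∧ P ≠ S ∧ Q ≠ R ∧ Q ≠ S ∧ R ≠ S ∧ P + Q = R + S ∧
        x = Pi.single P 1 + Pi.single Q 1 - Pi.single R 1 - Pi.single S 1} : ℚ) =
      ((n : ℚ) / ε) * (((n : ℚ) - ε) * ((n : ℚ) - ε - 2) / 4) +
        ((n : ℚ) - (n : ℚ) / ε) * ((n : ℚ) * ((n : ℚ) - 2) / 4) :=
  stmt_7_general G n ε hn hε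
end

section
/- Let G be a finite abelian group, g_0, ..., g_{n-1} an enumeration with g_0 = 0, and L = {x ∈ ℤ^n : Σ x_i = 0, Σ x_i g_i = 0}. Then L is generated, as a group, by the vectors e_P + e_Q − e_R − e_0 where P, Q, R are indices with g_P + g_Q = g_R. -/
/-!
`L` is the kernel of the weight map `x ↦ (∑ xᵢ, ∑ xᵢ gᵢ)` into `ℤ × G`. Modulo the subgroup `C`
generated by the relations, the classes `[e_P - e_0]` depend only on `g P` and add like the
`g P`, so they define a homomorphism `G → ℤⁿ ⧸ C`. Together with `m ↦ m [e_0]` this gives a map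
`ℤ × G → ℤⁿ ⧸ C` through which the quotient map factors via the weight map; hence `L ≤ C`.
-/

open Function

namespace LineRelations

variable {ι G : Type*} [AddCommGroup G]

def weightMap [Fintype ι] (g : ι → G) : (ι → ℤ) →+ ℤ × G :=
  (Fintype.linearCombination ℤ fun i => ((1 : ℤ), g i)).toAddMonoidHom

theorem weightMap_apply [Fintype ι] (g : ι → G) (x : ι → ℤ) :
    weightMap g x = (∑ i, x i, ∑ i, x i • g i) := by
  ext <;> simp [weightMap, Fintype.linearCombination_apply, Prod.fst_sum, Prod.snd_sum]

variable [DecidableEq ι]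

def lineRelations (g : ι → G) (i₀ : ι) : Set (ι → ℤ) :=
  {x | ∃ P Q R : ι, g P + g Q = g R ∧
    x = Pi.single P 1 + Pi.single Q 1 - Pi.single R 1 - Pi.single i₀ 1}

abbrev RelQuotient (g : ι → G) (i₀ : ι) := (ι → ℤ) ⧸ AddSubgroup.closure (lineRelations g i₀)

theorem mk_single_sub_add {g : ι → G} (i₀ : ι) {P Q R : ι} (h : g P + g Q = g R) :
    ((Pi.single P 1 - Pi.single i₀ 1 : ι → ℤ) : RelQuotient g i₀) +
      ↑(Pi.single Q 1 - Pi.single i₀ 1 : ι → ℤ) = ↑(Pi.single R 1 - Pi.single i₀ 1 : ι → ℤ) := by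
  rw [← QuotientAddGroup.mk_add, QuotientAddGroup.eq_iff_sub_mem]
  refine AddSubgroup.subset_closure ⟨P, Q, R, h, ?_⟩
  abel

noncomputable def relQuotientHom {g : ι → G} (hg : Surjective g) (i₀ : ι) : G →+ RelQuotient g i₀ :=
  AddMonoidHom.mk' (fun a => ↑(Pi.single (surjInv hg a) 1 - Pi.single i₀ 1 : ι → ℤ)) fun _ _ =>
    (mk_single_sub_add i₀ (by simp only [surjInv_eq])).symm

theorem relQuotientHom_apply {g : ι → G} (hg : Surjective g) {i₀ : ι} (hg₀ : g i₀ = 0) (P : ι) :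
    relQuotientHom hg i₀ (g P) = ↑(Pi.single P 1 - Pi.single i₀ 1 : ι → ℤ) := by
  have h := mk_single_sub_add (g := g) i₀ (P := P) (Q := i₀) (R := surjInv hg (g P))
    (by rw [hg₀, add_zero, surjInv_eq hg])
  rw [sub_self, QuotientAddGroup.mk_zero, add_zero] at h
  exact h.symm

variable [Fintype ι]

theorem weightMap_single (g : ι → G) (i : ι) : weightMap g (Pi.single i 1) = (1, g i) := by
  simp [weightMap, Fintype.linearCombination_apply_single]

theorem closure_lineRelations_le_ker {g : ι → G} {i₀ : ι} (hg₀ : g i₀ = 0) :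
    AddSubgroup.closure (lineRelations g i₀) ≤ (weightMap g).ker := by
  rw [AddSubgroup.closure_le]
  rintro _ ⟨P, Q, R, hPQR, rfl⟩
  simp only [SetLike.mem_coe, AddMonoidHom.mem_ker, map_sub, map_add, weightMap_single, hg₀,
    ← hPQR]
  ext <;> simp

theorem ker_weightMap_le_closure {g : ι → G} (hg : Surjective g) {i₀ : ι} (hg₀ : g i₀ = 0) :
    (weightMap g).ker ≤ AddSubgroup.closure (lineRelations g i₀) := by
  let θ : ℤ × G →+ RelQuotient g i₀ :=
    (zmultiplesHom _ ↑(Pi.single i₀ 1 : ι → ℤ)).coprod (relQuotientHom hg i₀)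
  have hθ : θ.comp (weightMap g) = QuotientAddGroup.mk' _ := by
    ext P
    simp [θ, weightMap_single, relQuotientHom_apply hg hg₀]
  intro x hx
  rw [← QuotientAddGroup.eq_zero_iff, ← QuotientAddGroup.mk'_apply, ← hθ,
    AddMonoidHom.comp_apply, AddMonoidHom.mem_ker.mp hx, map_zero]

theorem closure_lineRelations_eq_ker {g : ι → G} (hg : Surjective g) {i₀ : ι} (hg₀ : g i₀ = 0) :
    AddSubgroup.closure (lineRelations g i₀) = (weightMap g).ker :=
  (closure_lineRelations_le_ker hg₀).antisymm (ker_weightMap_le_closure hg hg₀)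

end LineRelations

theorem stmt_8_general (n : ℕ) (hn : 0 < n) (G : Type) [AddCommGroup G]
    (g : Fin n ≃ G) (hg0 : g ⟨0, hn⟩ = 0)
    (L : AddSubgroup (Fin n → ℤ))
    (hL : ∀ x, x ∈ L ↔ (∑ i, x i = 0 ∧ ∑ i, x i • g i = 0)) :
    L = AddSubgroup.closure {x : Fin n → ℤ | ∃ P Q R : Fin n, g P + g Q = g R ∧
      x = Pi.single P 1 + Pi.single Q 1 - Pi.single R 1 - Pi.single ⟨0, hn⟩ 1} := by
  have hker : L = (LineRelations.weightMap g).ker := by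
    ext x
    rw [hL, AddMonoidHom.mem_ker, LineRelations.weightMap_apply, Prod.mk_eq_zero]
  rw [hker]
  exact (LineRelations.closure_lineRelations_eq_ker g.surjective hg0).symm

/-- The lattice `L = {x ∈ ℤ^n : ∑ x i = 0, ∑ x i • g i = 0}` is
generated as a group by the vectors `e_P + e_Q − e_R − e_0` with `g P + g Q = g R`. -/
theorem stmt_8 (n : ℕ) (hn : 0 < n) (G : Type) [AddCommGroup G] [Fintype G]
    (hcard : Fintype.card G = n) (g : Fin n ≃ G) (hg0 : g ⟨0, hn⟩ = 0)
    (L : AddSubgroup (Fin n → ℤ))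
    (hL : ∀ x, x ∈ L ↔ (∑ i, x i = 0 ∧ ∑ i, x i • g i = 0)) :
    L = AddSubgroup.closure {x : Fin n → ℤ | ∃ P Q R : Fin n, g P + g Q = g R ∧
      x = Pi.single P 1 + Pi.single Q 1 - Pi.single R 1 - Pi.single ⟨0, hn⟩ 1} :=
  stmt_8_general n hn G g hg0 L hL
end

section
/- Let G be a finite abelian group of order n ≥ 5, g_0, ..., g_{n-1} an enumeration with g_0 = 0, and L = {x ∈ ℤ^n : Σ x_i = 0, Σ x_i g_i = 0}. Then every vector of the form e_P + e_Q − e_R − e_0 with g_P + g_Q = g_R (P, Q, R, 0 indices, not necessarily distinct) is an integer linear combination of vectors of L of Euclidean norm 2. -/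
/-!
If `P, Q, R, 0` are pairwise distinct, `e_P + e_Q - e_R - e_0` is itself a norm-2 vector of `L`,
and if `P = 0` or `Q = 0` it vanishes. In the remaining cases (`P = Q` or `R = 0`) pick an index
`S` and let `g_T = g_P + g_S`; then
`e_P + e_Q - e_R - e_0 = (e_P + e_S - e_T - e_0) + (e_Q + e_T - e_S - e_R)`,
and both summands are norm-2 vectors of `L` as soon as `g_S` avoids `0, g_P, g_Q, g_R, -g_P` and
`g_Q - g_P`. In these cases only four of those values are distinct, so `n ≥ 5` leaves room for `S`.
-/

open Finset

lemma exists_apply_ne {ι G : Type*} [Fintype ι] [DecidableEq ι] (g : ι ≃ G)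
    (h : 4 < Fintype.card ι) (a b c d : G) : ∃ S, g S ≠ a ∧ g S ≠ b ∧ g S ≠ c ∧ g S ≠ d := by
  obtain ⟨S, -, hS⟩ := exists_mem_notMem_of_card_lt_card
    (s := {g.symm a, g.symm b, g.symm c, g.symm d}) (t := univ) (card_le_four.trans_lt h)
  simp only [mem_insert, mem_singleton, not_or, Equiv.eq_symm_apply] at hS
  exact ⟨S, hS⟩

section

variable {ι G : Type*} [DecidableEq ι] [AddCommGroup G]

def rootVector (A B C D : ι) : ι → ℤ :=
  Pi.single A 1 + Pi.single B 1 - Pi.single C 1 - Pi.single D 1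

lemma rootVector_eq_add_rootVector (P Q R S T z : ι) :
    rootVector P Q R z = rootVector P S T z + rootVector Q T S R := by
  simp only [rootVector]
  abel

variable [Fintype ι]

def minimalVectors (g : ι → G) : Set (ι → ℤ) :=
  {x | (∑ i, x i = 0) ∧ (∑ i, x i • g i = 0) ∧ Real.sqrt (∑ i, ((x i : ℝ)) ^ 2) = 2}

lemma sum_rootVector (A B C D : ι) : ∑ i, rootVector A B C D i = 0 := by
  simp [rootVector, sum_add_distrib, sum_sub_distrib]

lemma sum_rootVector_smul (g : ι → G) (A B C D : ι) :
    ∑ i, rootVector A B C D i • g i = g A + g B - g C - g D := by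
  simp [rootVector, add_smul, sub_smul, sum_add_distrib, sum_sub_distrib, Pi.single_apply,
    ite_smul]

lemma sum_rootVector_sq {A B C D : ι} (hAB : A ≠ B) (hAC : A ≠ C) (hAD : A ≠ D) (hBC : B ≠ C)
    (hBD : B ≠ D) (hCD : C ≠ D) : ∑ i, ((rootVector A B C D i : ℤ) : ℝ) ^ 2 = 4 := by
  have hsq : ∀ i, ((rootVector A B C D i : ℤ) : ℝ) ^ 2 =
      (Pi.single A 1 + Pi.single B 1 + Pi.single C 1 + Pi.single D 1 : ι → ℝ) i := by
    intro i
    simp only [rootVector, Pi.add_apply, Pi.sub_apply, Pi.single_apply]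
    split_ifs <;> simp_all
  norm_num [hsq, sum_add_distrib]

lemma rootVector_mem_minimalVectors {g : ι → G} {A B C D : ι} (hAB : A ≠ B) (hAC : A ≠ C)
    (hAD : A ≠ D) (hBC : B ≠ C) (hBD : B ≠ D) (hCD : C ≠ D) (h : g A + g B = g C + g D) :
    rootVector A B C D ∈ minimalVectors g := by
  refine ⟨sum_rootVector A B C D, ?_, ?_⟩
  · rw [sum_rootVector_smul, h]
    abel
  · rw [sum_rootVector_sq hAB hAC hAD hBC hBD hCD, show (4 : ℝ) = 2 ^ 2 by norm_num,
      Real.sqrt_sq zero_le_two]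

lemma rootVector_mem_closure_of_apply_ne {g : ι ≃ G} {P Q R z S : ι} (hz : g z = 0)
    (hPQR : g P + g Q = g R) (hP : g P ≠ 0) (hS0 : g S ≠ 0) (hSP : g S ≠ g P)
    (hSQ : g S ≠ g Q) (hSR : g S ≠ g R) (hSneg : g S ≠ -g P) (hSsub : g S ≠ g Q - g P) :
    rootVector P Q R z ∈ AddSubgroup.closure (minimalVectors g) := by
  set T := g.symm (g P + g S)
  have hT : g T = g P + g S := g.apply_symm_apply _
  rw [rootVector_eq_add_rootVector P Q R S T z]
  refine add_mem (AddSubgroup.subset_closure ?_) (AddSubgroup.subset_closure ?_) <;>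
    refine rootVector_mem_minimalVectors ?_ ?_ ?_ ?_ ?_ ?_ ?_ <;>
    first
    | (apply ne_of_apply_ne g; grind)
    | grind

end

/-- For `G` finite abelian of order `n ≥ 5`, enumeration `g`,
`g 0 = 0`: every vector `e_P + e_Q − e_R − e_0` with `g P + g Q = g R` is an
integer linear combination of vectors of `L` of Euclidean norm `2`. -/
theorem stmt_9 (n : ℕ) (hn : 5 ≤ n) (G : Type) [AddCommGroup G]
    (g : Fin n ≃ G) (hg0 : g ⟨0, by omega⟩ = 0)
    (P Q R : Fin n) (hPQR : g P + g Q = g R) :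
    (Pi.single P 1 + Pi.single Q 1 - Pi.single R 1 - Pi.single ⟨0, by omega⟩ 1 : Fin n → ℤ) ∈
      AddSubgroup.closure {x : Fin n → ℤ | (∑ i, x i = 0) ∧ (∑ i, x i • g i = 0) ∧
        Real.sqrt (∑ i, ((x i : ℝ)) ^ 2) = 2} := by
  set z : Fin n := ⟨0, by omega⟩
  change rootVector P Q R z ∈ AddSubgroup.closure (minimalVectors g)
  have hcard : 4 < Fintype.card (Fin n) := by rw [Fintype.card_fin]; omega
  have hzero : ∀ {A}, g A = 0 → A = z := fun h => g.injective (h.trans hg0.symm)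
  by_cases hP : g P = 0
  · obtain rfl := hzero hP
    obtain rfl : Q = R := g.injective (by rwa [hP, zero_add] at hPQR)
    simp [rootVector]
  by_cases hQ : g Q = 0
  · obtain rfl := hzero hQ
    obtain rfl : P = R := g.injective (by rwa [hQ, add_zero] at hPQR)
    simp [rootVector]
  by_cases hR : g R = 0
  · obtain ⟨S, hS0, hSP, hSQ, hSsub⟩ := exists_apply_ne g hcard 0 (g P) (g Q) (g Q - g P)
    exact rootVector_mem_closure_of_apply_ne hg0 hPQR hP hS0 hSP hSQ (by rwa [hR])
      (by rwa [add_eq_zero_iff_neg_eq.mp (hPQR.trans hR)]) hSsub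
  by_cases hPQ : P = Q
  · subst hPQ
    obtain ⟨S, hS0, hSP, hSR, hSneg⟩ := exists_apply_ne g hcard 0 (g P) (g R) (-g P)
    exact rootVector_mem_closure_of_apply_ne hg0 hPQR hP hS0 hSP hSP hSR hSneg (by rwa [sub_self])
  refine AddSubgroup.subset_closure (rootVector_mem_minimalVectors hPQ ?_ ?_ ?_ ?_ ?_ ?_) <;>
    first
    | (apply ne_of_apply_ne g; grind)
    | grind
end

section
/- Let G = ℤ/3ℤ with enumeration g_0 = 0, g_1 = 1, g_2 = 2, and L = {x ∈ ℤ³ : x_0 + x_1 + x_2 = 0 and x_1 + 2x_2 ≡ 0 (mod 3)}. Then the minimal nonzero norm in L is √6, and the vectors of norm √6 in L are exactly ±(−2, 1, 1), ±(1, −2, 1), ±(1, 1, −2). -/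
/-! Eliminate `x₀ = -x₁ - x₂`; the congruence says `x₁ ≡ x₂ mod 3`, so `x₁ = c + 3d` with
`c = x₂`, and the squared norm becomes `6 (c² + 3cd + 3d²)`. This binary form is positive definite,
as `4 (c² + 3cd + 3d²) = (2c + 3d)² + 3d²`, so nonzero lattice vectors have squared norm at least
`6`. Those of squared norm exactly `6` have all coordinates in `[-2, 2]` and are found by
enumeration. -/

lemma sq_add_sq_add_sq_eq_six_mul {a b c d : ℤ} (habc : a + b + c = 0) (hbc : b = c + 3 * d) :
    a ^ 2 + b ^ 2 + c ^ 2 = 6 * (c ^ 2 + 3 * c * d + 3 * d ^ 2) := by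
  obtain rfl : a = -b - c := by omega
  subst hbc
  ring

lemma one_le_sq_add_three_mul_add_three_mul_sq {c d : ℤ} (h : c ≠ 0 ∨ d ≠ 0) :
    1 ≤ c ^ 2 + 3 * c * d + 3 * d ^ 2 := by
  have hpos : 0 < (2 * c + 3 * d) ^ 2 + 3 * d ^ 2 := by
    rcases eq_or_ne d 0 with rfl | hd
    · have hc : 2 * c + 3 * 0 ≠ 0 := by omega
      simpa using sq_pos_of_ne_zero hc
    · positivity
  nlinarith

lemma six_le_sq_add_sq_add_sq {a b c : ℤ} (habc : a + b + c = 0) (h3 : (3 : ℤ) ∣ b + 2 * c)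
    (hne : a ≠ 0 ∨ b ≠ 0 ∨ c ≠ 0) : 6 ≤ a ^ 2 + b ^ 2 + c ^ 2 := by
  obtain ⟨k, hk⟩ := h3
  have hbc : b = c + 3 * (k - c) := by omega
  rw [sq_add_sq_add_sq_eq_six_mul habc hbc]
  have : c ≠ 0 ∨ k - c ≠ 0 := by omega
  linarith [one_le_sq_add_three_mul_add_three_mul_sq this]

lemma mem_minimal_vectors {a b c : ℤ} (habc : a + b + c = 0) (h3 : (3 : ℤ) ∣ b + 2 * c)
    (h6 : a ^ 2 + b ^ 2 + c ^ 2 = 6) :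
    ![a, b, c] ∈ ({![-2, 1, 1], ![2, -1, -1], ![1, -2, 1], ![-1, 2, -1], ![1, 1, -2],
      ![-1, -1, 2]} : Set (Fin 3 → ℤ)) := by
  have hb₁ : -2 ≤ b := by nlinarith [sq_nonneg a, sq_nonneg c]
  have hb₂ : b ≤ 2 := by nlinarith [sq_nonneg a, sq_nonneg c]
  have hc₁ : -2 ≤ c := by nlinarith [sq_nonneg a, sq_nonneg b]
  have hc₂ : c ≤ 2 := by nlinarith [sq_nonneg a, sq_nonneg b]
  obtain rfl : a = -b - c := by omega
  interval_cases b <;> interval_cases c <;> simp_all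

lemma sum_sq_fin_three_cast (x : Fin 3 → ℤ) :
    ∑ i, ((x i : ℝ)) ^ 2 = ((x 0 ^ 2 + x 1 ^ 2 + x 2 ^ 2 : ℤ) : ℝ) := by
  push_cast
  exact Fin.sum_univ_three _

/-- For `G = ℤ/3ℤ` with enumeration `0, 1, 2`, the lattice
`L = {x ∈ ℤ³ : x₀ + x₁ + x₂ = 0, 3 ∣ x₁ + 2x₂}` has minimal nonzero norm `√6`,
and its norm-`√6` vectors are exactly `±(−2,1,1), ±(1,−2,1), ±(1,1,−2)`. -/
theorem stmt_11 :
    (∀ x : Fin 3 → ℤ, x 0 + x 1 + x 2 = 0 → (3 : ℤ) ∣ x 1 + 2 * x 2 → x ≠ 0 →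
      Real.sqrt 6 ≤ Real.sqrt (∑ i, ((x i : ℝ)) ^ 2)) ∧
    {x : Fin 3 → ℤ | x 0 + x 1 + x 2 = 0 ∧ (3 : ℤ) ∣ x 1 + 2 * x 2 ∧
        Real.sqrt (∑ i, ((x i : ℝ)) ^ 2) = Real.sqrt 6} =
      {![-2, 1, 1], ![2, -1, -1], ![1, -2, 1], ![-1, 2, -1], ![1, 1, -2], ![-1, -1, 2]} := by
  have eta (x : Fin 3 → ℤ) : ![x 0, x 1, x 2] = x := by ext i; fin_cases i <;> rfl
  refine ⟨fun x h0 h3 hx ↦ Real.sqrt_le_sqrt ?_, ?_⟩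
  · have hne : x 0 ≠ 0 ∨ x 1 ≠ 0 ∨ x 2 ≠ 0 := by
      contrapose! hx
      ext i
      fin_cases i <;> simp [hx]
    rw [sum_sq_fin_three_cast]
    exact_mod_cast six_le_sq_add_sq_add_sq h0 h3 hne
  · ext x
    have hnorm : Real.sqrt (∑ i, ((x i : ℝ)) ^ 2) = Real.sqrt 6 ↔
        x 0 ^ 2 + x 1 ^ 2 + x 2 ^ 2 = 6 := by
      rw [Real.sqrt_inj (by positivity) (by norm_num), sum_sq_fin_three_cast]
      exact_mod_cast Iff.rfl
    simp only [Set.mem_ofPred_eq, hnorm]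
    constructor
    · rintro ⟨h0, h3, h6⟩
      simpa only [eta] using mem_minimal_vectors h0 h3 h6
    · rintro (rfl | rfl | rfl | rfl | rfl | rfl) <;> decide
end

section
/- Let G be a finite abelian group of order n with enumeration g_0, ..., g_{n-1}, g_0 = 0, and L = {x ∈ ℤ^n : Σ x_i = 0, Σ x_i g_i = 0}. Then for every v ∈ ℝ^n with Σ v_i = 0 there exists w ∈ L with ‖v − w‖ ≤ (√(n² + 4n + 8) + √n)/2. In other words, the covering radius of L (inside the hyperplane Σ x_i = 0) is at most (√(n² + 4n + 8) + √n)/2. -/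
/-!
Round `v` coordinatewise to `u`; this moves it by at most `√n / 2`, and since `∑ v = 0` the
coordinate sum `s` of `u` satisfies `|s| ≤ n / 2`. Because `g` is onto, `∑ uᵢ gᵢ = g j` for
some `j`; subtracting `s - 1` at the coordinate `z` with `g z = 0` and `1` at `j` kills both sums
and moves `u` by at most `√((|s| + 1)² + 1) ≤ √(n² + 4n + 8) / 2`.
-/

open Finset WithLp

section
variable {ι : Type*} [Fintype ι]

theorem abs_sum_round_sub_sum_le (v : ι → ℝ) :
    |∑ i, (round (v i) : ℝ) - ∑ i, v i| ≤ Fintype.card ι / 2 := by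
  rw [← sum_sub_distrib]
  calc |∑ i, ((round (v i) : ℝ) - v i)| ≤ ∑ i, |(round (v i) : ℝ) - v i| :=
        abs_sum_le_sum_abs _ _
    _ ≤ ∑ _i : ι, (1 / 2 : ℝ) :=
        sum_le_sum fun i _ => (abs_sub_comm _ _).trans_le (abs_sub_round (v i))
    _ = Fintype.card ι / 2 := by simp [div_eq_mul_inv]

theorem dist_toLp_round_le (v : ι → ℝ) :
    dist (toLp 2 v) (toLp 2 fun i => (round (v i) : ℝ)) ≤ √(Fintype.card ι) / 2 := by
  rw [EuclideanSpace.dist_eq]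
  calc √(∑ i, dist (v i) (round (v i)) ^ 2) ≤ √(∑ _i : ι, (1 / 2 : ℝ) ^ 2) :=
        Real.sqrt_le_sqrt <| sum_le_sum fun i _ =>
          pow_le_pow_left₀ dist_nonneg (abs_sub_round (v i)) 2
    _ = √(Fintype.card ι) / 2 := by
        rw [sum_const, card_univ, nsmul_eq_mul, Real.sqrt_mul (Nat.cast_nonneg _),
          Real.sqrt_sq (by norm_num)]
        ring

variable [DecidableEq ι]

theorem norm_single_sub_one_add_single_one_le (z j : ι) (s : ℝ) :
    ‖EuclideanSpace.single z (s - 1) + EuclideanSpace.single j (1 : ℝ)‖ ≤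
      √((|s| + 1) ^ 2 + 1) := by
  by_cases hzj : z = j
  · subst hzj
    rw [← PiLp.single_add, sub_add_cancel, PiLp.norm_single, Real.norm_eq_abs]
    exact Real.abs_le_sqrt (by nlinarith [sq_abs s, abs_nonneg s])
  · have horth :
        inner ℝ (EuclideanSpace.single z (s - 1)) (EuclideanSpace.single j (1 : ℝ)) = 0 := by
      simp [EuclideanSpace.inner_single_left, hzj]
    have hpyth := norm_add_sq_eq_norm_sq_add_norm_sq_real horth
    simp only [PiLp.norm_single, Real.norm_eq_abs, abs_one] at hpyth
    rw [Real.le_sqrt (norm_nonneg _) (by positivity)]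
    nlinarith [abs_mul_abs_self (s - 1), abs_nonneg s, le_abs_self s, neg_abs_le s]

theorem exists_sum_eq_zero_sum_smul_eq_zero_dist_le {G : Type*} [AddCommGroup G] {g : ι → G}
    (hg : Function.Surjective g) {z : ι} (hz : g z = 0) (u : ι → ℤ) :
    ∃ w : ι → ℤ, ∑ i, w i = 0 ∧ ∑ i, w i • g i = 0 ∧
      dist (toLp 2 fun i => (u i : ℝ)) (toLp 2 fun i => (w i : ℝ)) ≤
        √((|((∑ i, u i : ℤ) : ℝ)| + 1) ^ 2 + 1) := by
  obtain ⟨j, hj⟩ := hg (∑ i, u i • g i)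
  set s := ∑ i, u i
  set w : ι → ℤ := u - Pi.single z (s - 1) - Pi.single j 1
  refine ⟨w, ?_, ?_, ?_⟩
  · simp [w, sum_sub_distrib, s]
  · simp [w, sub_smul, sum_sub_distrib, Pi.single_apply, ite_smul, hz, hj]
  · have hdiff : (toLp 2 fun i => (u i : ℝ)) - (toLp 2 fun i => (w i : ℝ)) =
        EuclideanSpace.single z ((s : ℝ) - 1) + EuclideanSpace.single j 1 := by
      ext i
      simp only [PiLp.sub_apply, PiLp.add_apply, PiLp.single_apply, w, Pi.sub_apply,
        Pi.single_apply, Int.cast_sub, Int.cast_ite, Int.cast_one, Int.cast_zero]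
      split_ifs <;> ring
    rw [dist_eq_norm, hdiff]
    exact norm_single_sub_one_add_single_one_le z j s
end

theorem stmt_13_general (n : ℕ) (hn : 0 < n) (G : Type) [AddCommGroup G]
    (g : Fin n ≃ G) (hg0 : g ⟨0, hn⟩ = 0)
    (v : Fin n → ℝ) (hv : ∑ i, v i = 0) :
    ∃ w : Fin n → ℤ, (∑ i, w i = 0) ∧ (∑ i, w i • g i = 0) ∧
      Real.sqrt (∑ i, (v i - (w i : ℝ)) ^ 2) ≤
        (Real.sqrt ((n : ℝ) ^ 2 + 4 * n + 8) + Real.sqrt n) / 2 := by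
  set u : Fin n → ℤ := fun i => round (v i)
  obtain ⟨w, hw, hwg, hdist⟩ := exists_sum_eq_zero_sum_smul_eq_zero_dist_le g.surjective hg0 u
  refine ⟨w, hw, hwg, ?_⟩
  have hs : |((∑ i, u i : ℤ) : ℝ)| ≤ n / 2 := by
    simpa [u, hv] using abs_sum_round_sub_sum_le v
  have hround : dist (toLp 2 v) (toLp 2 fun i => (u i : ℝ)) ≤ √n / 2 := by
    simpa using dist_toLp_round_le v
  have hcorr :
      √((|((∑ i, u i : ℤ) : ℝ)| + 1) ^ 2 + 1) ≤ √((n : ℝ) ^ 2 + 4 * n + 8) / 2 := by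
    rw [show (n : ℝ) ^ 2 + 4 * n + 8 = ((n / 2 + 1) ^ 2 + 1) * 2 ^ 2 by ring,
      Real.sqrt_mul (by positivity), Real.sqrt_sq two_pos.le, mul_div_cancel_right₀ _ two_ne_zero]
    gcongr
  calc √(∑ i, (v i - (w i : ℝ)) ^ 2) = dist (toLp 2 v) (toLp 2 fun i => (w i : ℝ)) := by
        simp [EuclideanSpace.dist_eq, Real.dist_eq]
    _ ≤ dist (toLp 2 v) (toLp 2 fun i => (u i : ℝ)) +
        dist (toLp 2 fun i => (u i : ℝ)) (toLp 2 fun i => (w i : ℝ)) := dist_triangle _ _ _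
    _ ≤ (√((n : ℝ) ^ 2 + 4 * n + 8) + √n) / 2 := by linarith [hdist.trans hcorr]

/-- Covering radius bound: for every `v ∈ ℝ^n` with `∑ v i = 0`
there is `w ∈ L = {x ∈ ℤ^n : ∑ x i = 0, ∑ x i • g i = 0}` with
`‖v − w‖ ≤ (√(n² + 4n + 8) + √n)/2`. -/
theorem stmt_13 (n : ℕ) (hn : 0 < n) (G : Type) [AddCommGroup G] [Fintype G]
    (hcard : Fintype.card G = n) (g : Fin n ≃ G) (hg0 : g ⟨0, hn⟩ = 0)
    (v : Fin n → ℝ) (hv : ∑ i, v i = 0) :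
    ∃ w : Fin n → ℤ, (∑ i, w i = 0) ∧ (∑ i, w i • g i = 0) ∧
      Real.sqrt (∑ i, (v i - (w i : ℝ)) ^ 2) ≤
        (Real.sqrt ((n : ℝ) ^ 2 + 4 * n + 8) + Real.sqrt n) / 2 :=
  stmt_13_general n hn G g hg0 v hv
end

section
/- Let G be a finite abelian group of order n with enumeration g_0, ..., g_{n-1}, g_0 = 0, and L = {x ∈ ℤ^n : Σ x_i = 0, Σ x_i g_i = 0}. Then for every integer vector v ∈ ℤ^n with Σ v_i = 0, there exists w ∈ L with ‖v − w‖ ≤ √2. -/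
/-!
Let `s = ∑ v i • g i` and pick `j` with `g j = s`. Moving one unit of `v` from coordinate `j`
to the coordinate `i₀` with `g i₀ = 0` keeps the coordinate sum, lowers the weighted sum by
`g j - g i₀ = s` to `0`, and changes `v` by `e_j - e_{i₀}`, a vector of squared length at most `2`.
-/

open Finset

section

variable {ι : Type*} [Fintype ι] [DecidableEq ι]

lemma sum_single_sub_single_smul {G : Type*} [AddCommGroup G] (g : ι → G) (j i₀ : ι) :
    ∑ i, (Pi.single j 1 - Pi.single i₀ 1 : ι → ℤ) i • g i = g j - g i₀ := by
  simp [sub_smul, sum_sub_distrib, Pi.single_apply, ite_smul]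

lemma sum_sq_single_sub_single_le_two (j i₀ : ι) :
    ∑ i, (Pi.single j 1 - Pi.single i₀ 1 : ι → ℤ) i ^ 2 ≤ 2 := by
  have hsingle (k : ι) : 0 ≤ (Pi.single k 1 : ι → ℤ) := Pi.single_nonneg.2 zero_le_one
  calc ∑ i, (Pi.single j 1 - Pi.single i₀ 1 : ι → ℤ) i ^ 2
      ≤ ∑ i, ((Pi.single j 1 : ι → ℤ) i ^ 2 + (Pi.single i₀ 1 : ι → ℤ) i ^ 2) :=
        sum_le_sum fun i _ => by
          rw [Pi.sub_apply]; nlinarith [mul_nonneg (hsingle j i) (hsingle i₀ i)]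
    _ = 2 := by simp [sum_add_distrib, Pi.single_apply]

end

theorem stmt_14_general (n : ℕ) (hn : 0 < n) (G : Type) [AddCommGroup G]
    (g : Fin n ≃ G) (hg0 : g ⟨0, hn⟩ = 0)
    (v : Fin n → ℤ) (hv : ∑ i, v i = 0) :
    ∃ w : Fin n → ℤ, (∑ i, w i = 0) ∧ (∑ i, w i • g i = 0) ∧
      Real.sqrt (∑ i, ((v i : ℝ) - (w i : ℝ)) ^ 2) ≤ Real.sqrt 2 := by
  set j := g.symm (∑ i, v i • g i)
  set d : Fin n → ℤ := Pi.single j 1 - Pi.single ⟨0, hn⟩ 1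
  have hd_sum : ∑ i, d i = 0 := by simp [d]
  have hd_smul : ∑ i, d i • g i = ∑ i, v i • g i := by
    simp only [d]
    rw [sum_single_sub_single_smul, hg0, sub_zero, Equiv.apply_symm_apply]
  have hd_sq : ∑ i, d i ^ 2 ≤ 2 := sum_sq_single_sub_single_le_two j ⟨0, hn⟩
  refine ⟨v - d, ?_, ?_, ?_⟩
  · simp only [Pi.sub_apply, sum_sub_distrib, hv, hd_sum, sub_zero]
  · simp only [Pi.sub_apply, sub_smul, sum_sub_distrib, hd_smul, sub_self]
  · have hdist : ∑ i, ((v i : ℝ) - ((v - d) i : ℝ)) ^ 2 = ((∑ i, d i ^ 2 : ℤ) : ℝ) := by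
      push_cast
      simp only [Pi.sub_apply, Int.cast_sub, sub_sub_cancel]
    rw [hdist]
    gcongr
    exact_mod_cast hd_sq

/-- Every integer vector `v` with `∑ v i = 0` is within distance
`√2` of the lattice `L = {x ∈ ℤ^n : ∑ x i = 0, ∑ x i • g i = 0}`. -/
theorem stmt_14 (n : ℕ) (hn : 0 < n) (G : Type) [AddCommGroup G] [Fintype G]
    (hcard : Fintype.card G = n) (g : Fin n ≃ G) (hg0 : g ⟨0, hn⟩ = 0)
    (v : Fin n → ℤ) (hv : ∑ i, v i = 0) :
    ∃ w : Fin n → ℤ, (∑ i, w i = 0) ∧ (∑ i, w i • g i = 0) ∧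
      Real.sqrt (∑ i, ((v i : ℝ) - (w i : ℝ)) ^ 2) ≤ Real.sqrt 2 :=
  stmt_14_general n hn G g hg0 v hv
end
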